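/- arXiv:2406.07219 — 5 statements merged into one kernel-verified Lean document; each statement's English description precedes it below -/
import Mathlib

section
/- Let A be a unital C*-algebra with a faithful tracial state τ. If (x_n) is a sequence in the density space D_τ(A) converging in the C*-norm to x ∈ D_τ(A), then x_n converges to x with respect to the Bures metric d_B^τ, i.e. √(1 − τ(|√(x_n)·√x|)) → 0. -/
open Filter Topology ComplexOrder

section BuresAux

open CFC NNReal

variable {A : Type*} [CStarAlgebra A] [PartialOrder A] [StarOrderedRing A]

omit [PartialOrder A] [StarOrderedRing A] in
lemma aux_sr_le (a b : A) : spectralRadius ℂ (a * b) ≤ spectralRadius ℂ (b * a) := by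
  rw [spectralRadius, spectralRadius]
  refine iSup₂_le fun k hk => ?_
  rcases eq_or_ne k 0 with rfl | hk0
  · simp
  · have hmem : k ∈ spectrum ℂ (a * b) \ {0} := ⟨hk, hk0⟩
    rw [spectrum.nonzero_mul_comm] at hmem
    exact le_iSup₂_of_le k hmem.1 le_rfl

omit [PartialOrder A] [StarOrderedRing A] in
lemma aux_sr_comm (a b : A) : spectralRadius ℂ (a * b) = spectralRadius ℂ (b * a) :=
  le_antisymm (aux_sr_le a b) (aux_sr_le b a)

lemma aux_sqrt_le_sqrt {a : A} (b : Aˣ) (ha : 0 ≤ a) (hb : 0 ≤ (b : A))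
    (hab : a ≤ (b : A)) : CFC.sqrt a ≤ CFC.sqrt (b : A) := by
  nontriviality A
  have hsb : 0 ≤ CFC.sqrt (b : A) := CFC.sqrt_nonneg _
  have hss : CFC.sqrt (b : A) * CFC.sqrt (b : A) = (b : A) := CFC.sqrt_mul_sqrt_self _ hb
  have hcomm : Commute (CFC.sqrt (b : A)) (b : A) := by
    show CFC.sqrt (b:A) * (b:A) = (b:A) * CFC.sqrt (b:A)
    set s := CFC.sqrt (b:A) with hs
    rw [← hss, mul_assoc]
  have hcomm' : Commute (CFC.sqrt (b : A)) ((↑b⁻¹ : A)) := hcomm.units_inv_right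
  have hBunit : IsUnit (CFC.sqrt (b : A)) := by
    refine ⟨⟨CFC.sqrt (b : A), CFC.sqrt (b : A) * ↑b⁻¹, ?_, ?_⟩, rfl⟩
    · rw [← mul_assoc, hss, Units.mul_inv]
    · rw [mul_assoc, ← hcomm'.eq, ← mul_assoc, hss, Units.mul_inv]
  obtain ⟨B, hB⟩ := hBunit
  have hBB : B * B = b := by ext; push_cast [hB]; exact hss
  have hBinvnonneg : (0:A) ≤ ↑B⁻¹ := CFC.inv_nonneg_of_nonneg B (hB ▸ hsb)
  have hBinv : CFC.sqrt ((↑b⁻¹ : A)) = (↑B⁻¹ : A) := by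
    refine CFC.sqrt_unique ?_ hBinvnonneg
    calc (↑B⁻¹ : A) * ↑B⁻¹ = ↑(B⁻¹ * B⁻¹) := rfl
      _ = ↑(B * B)⁻¹ := by rw [mul_inv_rev]
      _ = (↑b⁻¹ : A) := by rw [hBB]
  have key1 : ‖CFC.sqrt a * CFC.sqrt ((↑b⁻¹ : A))‖ ≤ 1 :=
    (le_iff_norm_sqrt_mul_sqrt_inv ha hb).mp hab
  rw [← hB, le_iff_norm_sqrt_mul_sqrt_inv (CFC.sqrt_nonneg _) (hB ▸ hsb)]
  set p := CFC.sqrt (CFC.sqrt a) with hp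
  set q := CFC.sqrt ((↑B⁻¹ : A)) with hq
  have hpn : (0:A) ≤ p := CFC.sqrt_nonneg _
  have hqn : (0:A) ≤ q := CFC.sqrt_nonneg _
  have hpp : p * p = CFC.sqrt a := CFC.sqrt_mul_sqrt_self _ (CFC.sqrt_nonneg _)
  have hqq : q * q = (↑B⁻¹ : A) := CFC.sqrt_mul_sqrt_self _ hBinvnonneg
  have hnorm_sq : ‖p * q‖ ^ 2 = ‖q * (CFC.sqrt a * q)‖ := by
    rw [sq, ← CStarRing.norm_star_mul_self, star_mul,
      (IsSelfAdjoint.of_nonneg hpn).star_eq, (IsSelfAdjoint.of_nonneg hqn).star_eq]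
    congr 1
    rw [mul_assoc, ← mul_assoc p p q, hpp]
  have hconj : (0:A) ≤ q * (CFC.sqrt a * q) := by
    have := conjugate_nonneg_of_nonneg (a := CFC.sqrt a) (CFC.sqrt_nonneg _) (c := q) hqn
    rwa [mul_assoc] at this
  have hsr : (‖q * (CFC.sqrt a * q)‖₊ : ENNReal) = spectralRadius ℂ (q * (CFC.sqrt a * q)) :=
    ((IsSelfAdjoint.of_nonneg hconj).spectralRadius_eq_nnnorm).symm
  have hswap : spectralRadius ℂ (q * (CFC.sqrt a * q)) = spectralRadius ℂ (CFC.sqrt a * ↑B⁻¹) := by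
    rw [aux_sr_comm q (CFC.sqrt a * q), mul_assoc, hqq]
  have hle : (‖q * (CFC.sqrt a * q)‖₊ : ENNReal) ≤ 1 := by
    rw [hsr, hswap, ← hBinv]
    calc spectralRadius ℂ (CFC.sqrt a * CFC.sqrt ((↑b⁻¹ : A)))
        ≤ (‖CFC.sqrt a * CFC.sqrt ((↑b⁻¹ : A))‖₊ : ENNReal) := spectrum.spectralRadius_le_nnnorm _
      _ ≤ 1 := by
          rw [← ENNReal.coe_one, ENNReal.coe_le_coe, ← NNReal.coe_le_coe]
          simpa using key1
  have hle' : ‖q * (CFC.sqrt a * q)‖ ≤ 1 := by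
    rw [← ENNReal.coe_one, ENNReal.coe_le_coe, ← NNReal.coe_le_coe] at hle
    simpa using hle
  have : ‖p * q‖ ^ 2 ≤ 1 := hnorm_sq ▸ hle'
  nlinarith [norm_nonneg (p * q)]

lemma aux_scalar1 (t ε : ℝ≥0) : NNReal.sqrt (t + ε) ≤ NNReal.sqrt t + NNReal.sqrt ε := by
  rw [NNReal.sqrt_le_iff_le_sq, add_sq, NNReal.sq_sqrt, NNReal.sq_sqrt, add_right_comm]
  exact le_self_add

lemma aux_scalar2 (t ε : ℝ≥0) : NNReal.sqrt (t * t + ε) ≤ t + NNReal.sqrt ε := by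
  rw [NNReal.sqrt_le_iff_le_sq, add_sq, NNReal.sq_sqrt, sq, add_right_comm]
  exact le_self_add

lemma aux_sqrt_add_const {d : A} (hd : 0 ≤ d) (ε : ℝ≥0) :
    CFC.sqrt (d + algebraMap ℝ≥0 A ε) ≤ CFC.sqrt d + algebraMap ℝ≥0 A (NNReal.sqrt ε) := by
  have h1 : d + algebraMap ℝ≥0 A ε = cfc (fun t : ℝ≥0 => t + ε) d := by
    have := cfc_add (a := d) (fun t : ℝ≥0 => t) (fun _ : ℝ≥0 => ε)
    rw [this, cfc_id' ℝ≥0 d, cfc_const ε d]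
  have h2 : CFC.sqrt d + algebraMap ℝ≥0 A (NNReal.sqrt ε)
      = cfc (fun t : ℝ≥0 => NNReal.sqrt t + NNReal.sqrt ε) d := by
    have := cfc_add (a := d) (fun t : ℝ≥0 => NNReal.sqrt t) (fun _ : ℝ≥0 => NNReal.sqrt ε)
    rw [this, cfc_const _ d, CFC.sqrt_eq_cfc]
  rw [h1, h2, CFC.sqrt_eq_cfc, ← cfc_comp' (fun s : ℝ≥0 => NNReal.sqrt s) (fun t : ℝ≥0 => t + ε) d]
  exact cfc_mono fun t _ => aux_scalar1 t ε

lemma aux_sqrt_sq_add_const {c : A} (hc : 0 ≤ c) (ε : ℝ≥0) :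
    CFC.sqrt (c * c + algebraMap ℝ≥0 A ε) ≤ c + algebraMap ℝ≥0 A (NNReal.sqrt ε) := by
  have h1 : c * c + algebraMap ℝ≥0 A ε = cfc (fun t : ℝ≥0 => t * t + ε) c := by
    have ha := cfc_add (a := c) (fun t : ℝ≥0 => t * t) (fun _ : ℝ≥0 => ε)
    have hm := cfc_mul (a := c) (fun t : ℝ≥0 => t) (fun t : ℝ≥0 => t)
    rw [ha, hm, cfc_id' ℝ≥0 c, cfc_const ε c]
  have h2 : c + algebraMap ℝ≥0 A (NNReal.sqrt ε)
      = cfc (fun t : ℝ≥0 => t + NNReal.sqrt ε) c := by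
    have := cfc_add (a := c) (fun t : ℝ≥0 => t) (fun _ : ℝ≥0 => NNReal.sqrt ε)
    rw [this, cfc_id' ℝ≥0 c, cfc_const _ c]
  rw [h1, h2, CFC.sqrt_eq_cfc,
    ← cfc_comp' (fun s : ℝ≥0 => NNReal.sqrt s) (fun t : ℝ≥0 => t * t + ε) c]
  exact cfc_mono fun t _ => aux_scalar2 t ε

lemma aux_algebraMap_nonneg (r : ℝ≥0) : (0:A) ≤ algebraMap ℝ≥0 A r := by
  have : algebraMap ℝ≥0 A r = cfc (fun _ : ℝ≥0 => r) (0:A) := (cfc_const r (0:A) (by simp)).symm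
  rw [this]
  exact cfc_nonneg fun x _ => zero_le

omit [PartialOrder A] [StarOrderedRing A] in
lemma aux_algebraMap_eq (r : ℝ≥0) : algebraMap ℝ≥0 A r = algebraMap ℝ A (r:ℝ) := by
  rw [IsScalarTower.algebraMap_apply ℝ≥0 ℝ A]; norm_num

lemma aux_key_bound (τ : A →ₗ[ℂ] ℂ) (hpos : ∀ a : A, 0 ≤ a → 0 ≤ τ a) (hstate : τ 1 = 1)
    {c d : A} (hc : 0 ≤ c) (hd : 0 ≤ d) (hτc : τ c = 1) :
    |(τ (CFC.sqrt d)).re - 1| ≤ Real.sqrt ‖d - c * c‖ := by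
  have hccsa : IsSelfAdjoint (c * c) := by
    rw [IsSelfAdjoint, star_mul, (IsSelfAdjoint.of_nonneg hc).star_eq]
  have hccnn : (0:A) ≤ c * c := by
    have := star_mul_self_nonneg c
    rwa [(IsSelfAdjoint.of_nonneg hc).star_eq] at this
  have hτalg : ∀ r : ℝ≥0, τ (algebraMap ℝ≥0 A r) = ((r:ℝ) : ℂ) := by
    intro r
    rw [aux_algebraMap_eq, IsScalarTower.algebraMap_apply ℝ ℂ A,
      Algebra.algebraMap_eq_smul_one, map_smul, hstate, smul_eq_mul, mul_one]
    norm_num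
  set ε : ℝ≥0 := ‖d - c * c‖₊ with hε
  have hεcoe : (ε : ℝ) = ‖d - c * c‖ := rfl
  rcases eq_or_ne ε 0 with h0 | hne
  · have hd0 : d = c * c := by
      have : d - c * c = 0 := by
        rw [← norm_eq_zero, ← hεcoe, h0, NNReal.coe_zero]
      linear_combination (norm := abel) this
    rw [hd0, CFC.sqrt_mul_self c hc, hτc]
    simp
  · set δ : ℝ≥0 := NNReal.sqrt ε with hδ
    have hsa : IsSelfAdjoint (d - c * c) := (IsSelfAdjoint.of_nonneg hd).sub hccsa
    have h_ub : d ≤ c * c + algebraMap ℝ≥0 A ε := by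
      have h := hsa.le_algebraMap_norm_self
      rw [sub_le_iff_le_add] at h
      rwa [aux_algebraMap_eq, hεcoe, add_comm]
    have hualg : IsUnit (algebraMap ℝ≥0 A ε) := (isUnit_iff_ne_zero.mpr hne).map (algebraMap ℝ≥0 A)
    have hu1 : IsUnit (c * c + algebraMap ℝ≥0 A ε) :=
      CStarAlgebra.isUnit_of_le (algebraMap ℝ≥0 A ε) (le_add_of_nonneg_left hccnn) ⟨aux_algebraMap_nonneg ε, hualg⟩
    have hupper : CFC.sqrt d ≤ c + algebraMap ℝ≥0 A δ := by
      have h2 := aux_sqrt_le_sqrt hu1.unit hd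
        (hu1.unit_spec.symm ▸ add_nonneg hccnn (aux_algebraMap_nonneg ε)) (hu1.unit_spec.symm ▸ h_ub)
      rw [hu1.unit_spec] at h2
      exact h2.trans (aux_sqrt_sq_add_const hc ε)
    have h_lb : c * c ≤ d + algebraMap ℝ≥0 A ε := by
      have h := ((IsSelfAdjoint.of_nonneg hd).sub hccsa).neg_algebraMap_norm_le_self
      rw [neg_le, neg_sub] at h
      rw [sub_le_iff_le_add] at h
      rwa [aux_algebraMap_eq, hεcoe, add_comm]
    have hu2 : IsUnit (d + algebraMap ℝ≥0 A ε) :=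
      CStarAlgebra.isUnit_of_le (algebraMap ℝ≥0 A ε) (le_add_of_nonneg_left hd) ⟨aux_algebraMap_nonneg ε, hualg⟩
    have hlower : c ≤ CFC.sqrt d + algebraMap ℝ≥0 A δ := by
      have h4 := aux_sqrt_le_sqrt hu2.unit hccnn
        (hu2.unit_spec.symm ▸ add_nonneg hd (aux_algebraMap_nonneg ε)) (hu2.unit_spec.symm ▸ h_lb)
      rw [hu2.unit_spec, CFC.sqrt_mul_self c hc] at h4
      exact h4.trans (aux_sqrt_add_const hd ε)
    have h6 : 0 ≤ τ (c + algebraMap ℝ≥0 A δ - CFC.sqrt d) := hpos _ (by rwa [sub_nonneg])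
    have h7 : 0 ≤ τ (CFC.sqrt d + algebraMap ℝ≥0 A δ - c) := hpos _ (by rwa [sub_nonneg])
    have h6' : 0 ≤ 1 + (δ:ℝ) - (τ (CFC.sqrt d)).re := by
      have := (Complex.le_def.mp h6).1
      rw [map_sub, map_add, hτc, hτalg] at this
      simpa using this
    have h7' : 0 ≤ (τ (CFC.sqrt d)).re + (δ:ℝ) - 1 := by
      have := (Complex.le_def.mp h7).1
      rw [map_sub, map_add, hτc, hτalg] at this
      simpa using this
    have hδcoe : (δ : ℝ) = Real.sqrt ‖d - c * c‖ := by
      rw [hδ, Real.coe_sqrt, hεcoe]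
    rw [← hδcoe, abs_le]
    constructor <;> linarith

end BuresAux

/-- Let `A` be a unital C*-algebra with a faithful tracial state `τ`.
If a sequence in the density space `D_τ(A) = {a ∈ A₊ : τ a = 1}` converges in the C*-norm
to `x ∈ D_τ(A)`, then it converges to `x` in the Bures metric, i.e.
`√(1 − τ(|√(x n) · √x|)) → 0`.  Here `√a = CFC.sqrt a` and `|a| = √(a⋆ a)`. -/
theorem bures_tendsto_of_norm_tendsto
    {A : Type*} [CStarAlgebra A] [PartialOrder A] [StarOrderedRing A]
    (τ : A →ₗ[ℂ] ℂ)
    (hpos : ∀ a : A, 0 ≤ a → 0 ≤ τ a)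
    (htrace : ∀ a b : A, τ (a * b) = τ (b * a))
    (hfaithful : ∀ a : A, 0 ≤ a → τ a = 0 → a = 0)
    (hstate : τ 1 = 1)
    (x : ℕ → A) (xlim : A)
    (hx : ∀ n, 0 ≤ x n) (hx1 : ∀ n, τ (x n) = 1)
    (hxlim : 0 ≤ xlim) (hxlim1 : τ xlim = 1)
    (hconv : Tendsto x atTop (𝓝 xlim)) :
    Tendsto
      (fun n =>
        Real.sqrt (1 - (τ (CFC.sqrt
          (star (CFC.sqrt (x n) * CFC.sqrt xlim) * (CFC.sqrt (x n) * CFC.sqrt xlim)))).re))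
      atTop (𝓝 0) := by
  set s := CFC.sqrt xlim with hs
  set d : ℕ → A := fun n => star (CFC.sqrt (x n) * s) * (CFC.sqrt (x n) * s) with hd
  have hdnn : ∀ n, 0 ≤ d n := fun n => star_mul_self_nonneg _
  have hdeq : ∀ n, d n = s * x n * s := by
    intro n
    rw [hd]
    dsimp only
    rw [star_mul, (IsSelfAdjoint.of_nonneg (CFC.sqrt_nonneg (a := x n))).star_eq,
      (IsSelfAdjoint.of_nonneg (CFC.sqrt_nonneg (a := xlim))).star_eq, ← hs,
      mul_assoc, ← mul_assoc (CFC.sqrt (x n)) (CFC.sqrt (x n)) s,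
      CFC.sqrt_mul_sqrt_self (x n) (hx n), ← mul_assoc]
  have hxe : xlim * xlim = s * xlim * s := by
    conv_rhs => rw [← CFC.sqrt_mul_sqrt_self xlim hxlim]
    rw [← hs, ← mul_assoc s s s, mul_assoc (s*s) s s, CFC.sqrt_mul_sqrt_self xlim hxlim]
  have hkey : ∀ n, |(τ (CFC.sqrt (d n))).re - 1| ≤ Real.sqrt (‖s‖ * ‖x n - xlim‖ * ‖s‖) := by
    intro n
    refine (aux_key_bound τ hpos hstate hxlim (hdnn n) hxlim1).trans (Real.sqrt_le_sqrt ?_)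
    have heq : d n - xlim * xlim = s * (x n - xlim) * s := by
      rw [hdeq n, hxe]
      noncomm_ring
    rw [heq]
    calc ‖s * (x n - xlim) * s‖ ≤ ‖s * (x n - xlim)‖ * ‖s‖ := norm_mul_le _ _
      _ ≤ ‖s‖ * ‖x n - xlim‖ * ‖s‖ := by
          gcongr
          exact norm_mul_le _ _
  have hnorm : Tendsto (fun n => ‖x n - xlim‖) atTop (𝓝 0) := by
    simpa using (hconv.sub (tendsto_const_nhds (x := xlim))).norm
  have hg : Tendsto (fun n => Real.sqrt (‖s‖ * ‖x n - xlim‖ * ‖s‖)) atTop (𝓝 0) := by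
    have h1 : Tendsto (fun n => ‖s‖ * ‖x n - xlim‖ * ‖s‖) atTop (𝓝 0) := by
      simpa using (hnorm.const_mul ‖s‖).mul_const ‖s‖
    have := (Real.continuous_sqrt.tendsto 0).comp h1
    rw [Real.sqrt_zero] at this
    exact this
  have hre : Tendsto (fun n => (τ (CFC.sqrt (d n))).re - 1) atTop (𝓝 0) :=
    squeeze_zero_norm (fun n => by simpa [Real.norm_eq_abs] using hkey n) hg
  have h1m : Tendsto (fun n => 1 - (τ (CFC.sqrt (d n))).re) atTop (𝓝 0) := by
    have := hre.neg
    simpa [neg_sub] using this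
  have hfin := (Real.continuous_sqrt.tendsto 0).comp h1m
  rw [Real.sqrt_zero] at hfin
  exact hfin
end

section
/- The function ratio r(t) = √(1 − √t) / (1 − t) satisfies lim_{t → 1⁻} r(t) = ∞. Consequently, on D_τ(ℂ²) with x = (1,0) and y = (t, 1−t), the ratio d_B^τ(x,y) / d_{L^B}^τ(x,y) = √(1 − √t)/(1 − t) is unbounded as t → 1⁻, so the Bures metric and the quantum metric d_{L^B}^τ are not metric (bi-Lipschitz) equivalent on D_τ(ℂ²). -/
/-! Since `1 - t = (1 + √t)(1 - √t)`, the ratio equals `1 / ((1 + √t) √(1 - √t))`, which blows up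
as `t → 1⁻`. At `x = (1, 0)`, `y = (t, 1 - t)` every square root in the Bures formula is computed
coordinatewise, giving `d_B = √(1 - √t)` while `|x₁ - y₁| = 1 - t`. -/

open Filter Topology ComplexOrder

/-- The trace `τ(x) = x₁ + x₂` on `ℂ²`. -/
noncomputable def tauC2 (x : ℂ × ℂ) : ℂ := x.1 + x.2

/-- The Bures distance on the density space of `ℂ²` with respect to `τ(x) = x₁ + x₂`:
`d_B^τ(x,y) = √(1 − τ(|√x √y|))`, where `√` is the CFC square root and `|a| = √(a⋆a)`. -/
noncomputable def buresC2 (x y : ℂ × ℂ) : ℝ :=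
  Real.sqrt (1 - (tauC2 (CFC.sqrt
    (star (CFC.sqrt x * CFC.sqrt y) * (CFC.sqrt x * CFC.sqrt y)))).re)

lemma CFC.sqrt_ofReal {r : ℝ} (hr : 0 ≤ r) : CFC.sqrt (r : ℂ) = (√r : ℂ) := by
  refine CFC.sqrt_unique ?_ (Complex.zero_le_real.mpr (Real.sqrt_nonneg r))
  rw [← Complex.ofReal_mul, Real.mul_self_sqrt hr]

lemma Complex.one_sub_ofReal_nonneg {t : ℝ} (ht : t ≤ 1) : (0 : ℂ) ≤ 1 - t := by
  rw [← Complex.ofReal_one, ← Complex.ofReal_sub, Complex.zero_le_real]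
  linarith

lemma buresC2_one_zero {t : ℝ} (ht₀ : 0 ≤ t) (ht₁ : t ≤ 1) :
    buresC2 (1, 0) (t, 1 - t) = √(1 - √t) := by
  have ht : (0 : ℂ) ≤ t := Complex.zero_le_real.mpr ht₀
  have hx : CFC.sqrt ((1 : ℂ), (0 : ℂ)) = (1, 0) := by
    rw [CFC.sqrt_map_prod, CFC.sqrt_one, CFC.sqrt_zero]
  have hy : CFC.sqrt ((t : ℂ), 1 - (t : ℂ)) = ((√t : ℂ), CFC.sqrt (1 - (t : ℂ))) := by
    rw [CFC.sqrt_map_prod (ha := ht) (hb := Complex.one_sub_ofReal_nonneg ht₁),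
      CFC.sqrt_ofReal ht₀]
  have hxy : star (((1 : ℂ), (0 : ℂ)) * ((√t : ℂ), CFC.sqrt (1 - (t : ℂ)))) *
      (((1 : ℂ), (0 : ℂ)) * ((√t : ℂ), CFC.sqrt (1 - (t : ℂ)))) = ((t : ℂ), (0 : ℂ)) := by
    ext <;> simp [← Complex.ofReal_mul, Real.mul_self_sqrt ht₀]
  unfold buresC2 tauC2
  rw [hx, hy, hxy, CFC.sqrt_map_prod (ha := ht) (hb := le_refl (0 : ℂ)), CFC.sqrt_ofReal ht₀,
    CFC.sqrt_zero]
  simp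

lemma Real.sqrt_one_sub_sqrt_div_one_sub {t : ℝ} (ht₀ : 0 ≤ t) (ht₁ : t < 1) :
    √(1 - √t) / (1 - t) = ((1 + √t) * √(1 - √t))⁻¹ := by
  have hlt : √t < 1 := by rw [Real.sqrt_lt' one_pos]; linarith
  have hpos : 0 < √(1 - √t) := Real.sqrt_pos.2 (by linarith)
  have hfactor : 1 - t = (1 + √t) * √(1 - √t) ^ 2 := by
    rw [Real.sq_sqrt (by linarith)]; nlinarith [Real.sq_sqrt ht₀]
  rw [hfactor]
  field_simp

theorem Real.tendsto_sqrt_one_sub_sqrt_div_one_sub :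
    Tendsto (fun t : ℝ => √(1 - √t) / (1 - t)) (𝓝[<] 1) atTop := by
  have hden : Tendsto (fun t : ℝ => (1 + √t) * √(1 - √t)) (𝓝[<] 1) (𝓝[>] 0) := by
    refine tendsto_nhdsWithin_of_tendsto_nhds_of_eventually_within _ ?_ ?_
    · have : Continuous (fun t : ℝ => (1 + √t) * √(1 - √t)) := by fun_prop
      simpa using (this.tendsto 1).mono_left nhdsWithin_le_nhds
    · filter_upwards [self_mem_nhdsWithin] with t (ht : t < 1)
      have : √t < 1 := by rw [Real.sqrt_lt' one_pos]; linarith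
      exact mul_pos (by positivity) (Real.sqrt_pos.2 (by linarith))
  refine (tendsto_inv_nhdsGT_zero.comp hden).congr' ?_
  filter_upwards [Ioo_mem_nhdsLT one_pos] with t ⟨ht₀, ht₁⟩
  exact (Real.sqrt_one_sub_sqrt_div_one_sub ht₀.le ht₁).symm

/-- The ratio `r(t) = √(1 − √t)/(1 − t)` tends to `∞` as `t → 1⁻`.
Consequently, on the density space `D_τ(ℂ²)` the ratio of the Bures metric to the
quantum metric `d_{L^B}^τ(x,y) = |x₁ − y₁|` is unbounded, so the two metrics are not
metric (bi-Lipschitz) equivalent. -/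
theorem bures_quantum_not_metric_equivalent_C2 :
    Tendsto (fun t : ℝ => Real.sqrt (1 - Real.sqrt t) / (1 - t)) (nhdsWithin 1 (Set.Iio 1))
      atTop
    ∧ ¬ ∃ α β : ℝ, 0 < α ∧ 0 < β ∧
        ∀ x y : ℂ × ℂ, 0 ≤ x.1 → 0 ≤ x.2 → x.1 + x.2 = 1 →
          0 ≤ y.1 → 0 ≤ y.2 → y.1 + y.2 = 1 →
          α * ‖x.1 - y.1‖ ≤ buresC2 x y ∧ buresC2 x y ≤ β * ‖x.1 - y.1‖ := by
  refine ⟨Real.tendsto_sqrt_one_sub_sqrt_div_one_sub, ?_⟩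
  rintro ⟨α, β, -, -, hequiv⟩
  obtain ⟨t, hβ, ht₀, ht₁⟩ :=
    ((Real.tendsto_sqrt_one_sub_sqrt_div_one_sub.eventually_gt_atTop β).and
      (Ioo_mem_nhdsLT one_pos)).exists
  have hupper := (hequiv (1, 0) (t, 1 - t) zero_le_one le_rfl (add_zero 1)
    (Complex.zero_le_real.mpr ht₀.le) (Complex.one_sub_ofReal_nonneg ht₁.le)
    (add_sub_cancel _ _)).2
  have hnorm : ‖(1 : ℂ) - t‖ = 1 - t := by
    rw [← Complex.ofReal_one, ← Complex.ofReal_sub, Complex.norm_real,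
      Real.norm_of_nonneg (by linarith)]
  rw [buresC2_one_zero ht₀.le ht₁.le, hnorm] at hupper
  rw [lt_div_iff₀ (by linarith)] at hβ
  linarith
end

section
/- On ℂ² with trace τ(x) = x₁ + x₂, the Bures metric d_B^τ and the sup-norm metric on the density space D_τ(ℂ²) are topologically equivalent but not metric equivalent. -/
open Filter Topology ComplexOrder

lemma aux_sqrt_pair (s t : ℝ) (hs : 0 ≤ s) (ht : 0 ≤ t) :
    CFC.sqrt (((s:ℂ), (t:ℂ)) : ℂ × ℂ) = ((Real.sqrt s : ℂ), (Real.sqrt t : ℂ)) := by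
  apply CFC.sqrt_unique
  · rw [Prod.mk_mul_mk, ← Complex.ofReal_mul, ← Complex.ofReal_mul,
      Real.mul_self_sqrt hs, Real.mul_self_sqrt ht]
  · rw [Prod.le_def]
    constructor <;> simp [Complex.zero_le_real, Real.sqrt_nonneg]

lemma aux_bures_eval (s t : ℝ) (hs0 : 0 ≤ s) (hs1 : s ≤ 1) (ht0 : 0 ≤ t) (ht1 : t ≤ 1) :
    buresC2 ((s:ℂ), ((1-s:ℝ):ℂ)) ((t:ℂ), ((1-t:ℝ):ℂ)) =
      Real.sqrt (1 - (Real.sqrt (s*t) + Real.sqrt ((1-s)*(1-t)))) := by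
  have hs1' : (0:ℝ) ≤ 1 - s := by linarith
  have ht1' : (0:ℝ) ≤ 1 - t := by linarith
  rw [buresC2, aux_sqrt_pair s (1-s) hs0 hs1', aux_sqrt_pair t (1-t) ht0 ht1']
  have h1 : star (((Real.sqrt s : ℂ), (Real.sqrt (1-s) : ℂ)) * ((Real.sqrt t : ℂ), (Real.sqrt (1-t) : ℂ)))
      * (((Real.sqrt s : ℂ), (Real.sqrt (1-s) : ℂ)) * ((Real.sqrt t : ℂ), (Real.sqrt (1-t) : ℂ)))
      = (((s*t : ℝ) : ℂ), (((1-s)*(1-t) : ℝ) : ℂ)) := by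
    simp only [Prod.mk_mul_mk, Prod.star_def, Complex.star_def, map_mul,
      Complex.conj_ofReal]
    rw [Prod.mk.injEq]
    constructor
    · push_cast
      rw [show ((Real.sqrt s : ℂ) * Real.sqrt t) * (Real.sqrt s * Real.sqrt t)
          = ((Real.sqrt s * Real.sqrt s : ℝ) : ℂ) * ((Real.sqrt t * Real.sqrt t : ℝ) : ℂ) by push_cast; ring,
        Real.mul_self_sqrt hs0, Real.mul_self_sqrt ht0]
    · push_cast
      rw [show ((Real.sqrt (1-s) : ℂ) * Real.sqrt (1-t)) * (Real.sqrt (1-s) * Real.sqrt (1-t))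
          = ((Real.sqrt (1-s) * Real.sqrt (1-s) : ℝ) : ℂ) * ((Real.sqrt (1-t) * Real.sqrt (1-t) : ℝ) : ℂ) by push_cast; ring,
        Real.mul_self_sqrt hs1', Real.mul_self_sqrt ht1']
      push_cast; ring
  rw [h1, aux_sqrt_pair _ _ (by positivity) (by positivity), tauC2]
  push_cast
  simp

/-- the fidelity defect formula -/
lemma aux_key (s t : ℝ) (hs0 : 0 ≤ s) (hs1 : s ≤ 1) (ht0 : 0 ≤ t) (ht1 : t ≤ 1) :
    1 - (Real.sqrt (s*t) + Real.sqrt ((1-s)*(1-t)))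
      = ((Real.sqrt s - Real.sqrt t)^2 + (Real.sqrt (1-s) - Real.sqrt (1-t))^2) / 2 := by
  have hs1' : (0:ℝ) ≤ 1 - s := by linarith
  have ht1' : (0:ℝ) ≤ 1 - t := by linarith
  rw [Real.sqrt_mul hs0, Real.sqrt_mul hs1']
  nlinarith [Real.sq_sqrt hs0, Real.sq_sqrt ht0, Real.sq_sqrt hs1', Real.sq_sqrt ht1']

lemma aux_sq_le_abs (s t : ℝ) (hs0 : 0 ≤ s) (ht0 : 0 ≤ t) :
    (Real.sqrt s - Real.sqrt t)^2 ≤ |s - t| := by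
  rcases le_total s t with h | h
  · rw [abs_of_nonpos (by linarith)]
    nlinarith [Real.sq_sqrt hs0, Real.sq_sqrt ht0, Real.sqrt_nonneg s, Real.sqrt_nonneg t,
      Real.sqrt_le_sqrt h]
  · rw [abs_of_nonneg (by linarith)]
    nlinarith [Real.sq_sqrt hs0, Real.sq_sqrt ht0, Real.sqrt_nonneg s, Real.sqrt_nonneg t,
      Real.sqrt_le_sqrt h]

lemma aux_upper (s t : ℝ) (hs0 : 0 ≤ s) (hs1 : s ≤ 1) (ht0 : 0 ≤ t) (ht1 : t ≤ 1) :
    Real.sqrt (1 - (Real.sqrt (s*t) + Real.sqrt ((1-s)*(1-t)))) ≤ Real.sqrt |s - t| := by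
  apply Real.sqrt_le_sqrt
  rw [aux_key s t hs0 hs1 ht0 ht1]
  have h1 := aux_sq_le_abs s t hs0 ht0
  have h2 := aux_sq_le_abs (1-s) (1-t) (by linarith) (by linarith)
  have h3 : |1 - s - (1 - t)| = |s - t| := by rw [abs_sub_comm]; ring_nf
  linarith [h2, h3 ▸ h2]

lemma aux_lower (s t : ℝ) (hs0 : 0 ≤ s) (hs1 : s ≤ 1) (ht0 : 0 ≤ t) (ht1 : t ≤ 1) :
    |s - t| ≤ 2 * Real.sqrt 2 * Real.sqrt (1 - (Real.sqrt (s*t) + Real.sqrt ((1-s)*(1-t)))) := by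
  have hs1' : (0:ℝ) ≤ 1 - s := by linarith
  have ht1' : (0:ℝ) ≤ 1 - t := by linarith
  have hkey := aux_key s t hs0 hs1 ht0 ht1
  have h1 : (Real.sqrt s - Real.sqrt t)^2 ≤ 2 * (1 - (Real.sqrt (s*t) + Real.sqrt ((1-s)*(1-t)))) := by
    rw [hkey]; nlinarith [sq_nonneg (Real.sqrt (1-s) - Real.sqrt (1-t))]
  have h2 : |Real.sqrt s - Real.sqrt t| ≤ Real.sqrt 2 * Real.sqrt (1 - (Real.sqrt (s*t) + Real.sqrt ((1-s)*(1-t)))) := by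
    rw [← Real.sqrt_sq_eq_abs, ← Real.sqrt_mul (by norm_num)]
    exact Real.sqrt_le_sqrt h1
  have h3 : |s - t| = |Real.sqrt s - Real.sqrt t| * (Real.sqrt s + Real.sqrt t) := by
    rw [← abs_of_nonneg (show (0:ℝ) ≤ Real.sqrt s + Real.sqrt t by positivity), ← abs_mul]
    congr 1
    nlinarith [Real.sq_sqrt hs0, Real.sq_sqrt ht0]
  have h4 : Real.sqrt s + Real.sqrt t ≤ 2 := by
    have := Real.sqrt_le_one.mpr hs1
    have := Real.sqrt_le_one.mpr ht1
    linarith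
  calc |s - t| = |Real.sqrt s - Real.sqrt t| * (Real.sqrt s + Real.sqrt t) := h3
    _ ≤ (Real.sqrt 2 * Real.sqrt (1 - (Real.sqrt (s*t) + Real.sqrt ((1-s)*(1-t))))) * 2 := by
        apply mul_le_mul h2 h4 (by positivity) (by positivity)
    _ = 2 * Real.sqrt 2 * Real.sqrt (1 - (Real.sqrt (s*t) + Real.sqrt ((1-s)*(1-t)))) := by ring

lemma aux_mem (x : ℂ × ℂ) (h1 : 0 ≤ x.1) (h2 : 0 ≤ x.2) (h3 : x.1 + x.2 = 1) :
    ∃ s : ℝ, 0 ≤ s ∧ s ≤ 1 ∧ x = ((s:ℂ), ((1-s:ℝ):ℂ)) := by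
  rw [Complex.nonneg_iff] at h1 h2
  refine ⟨x.1.re, h1.1, ?_, ?_⟩
  · have := congrArg Complex.re h3
    simp at this
    linarith [h2.1]
  · have hre := congrArg Complex.re h3
    have him := congrArg Complex.im h3
    simp at hre him
    refine Prod.ext ?_ ?_ <;> apply Complex.ext <;>
      simp [h1.2, h2.2] <;> linarith


/-- On `ℂ²` with trace `τ(x) = x₁ + x₂`, the Bures metric and the
sup-norm metric on the density space `D_τ(ℂ²) = {(t, 1−t) : t ∈ [0,1]}` are
topologically equivalent (a sequence converges in one metric iff it converges in the
other, to the same limit), but they are not metric (bi-Lipschitz) equivalent. -/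
theorem buresC2_supnorm_top_equiv_not_metric_equiv :
    (∀ (u : ℕ → ℂ × ℂ) (x : ℂ × ℂ),
      (∀ n, 0 ≤ (u n).1 ∧ 0 ≤ (u n).2 ∧ (u n).1 + (u n).2 = 1) →
      0 ≤ x.1 → 0 ≤ x.2 → x.1 + x.2 = 1 →
      (Tendsto (fun n => max ‖(u n).1 - x.1‖ ‖(u n).2 - x.2‖) atTop (𝓝 0) ↔
        Tendsto (fun n => buresC2 (u n) x) atTop (𝓝 0)))
    ∧ ¬ ∃ α β : ℝ, 0 < α ∧ 0 < β ∧
        ∀ x y : ℂ × ℂ, 0 ≤ x.1 → 0 ≤ x.2 → x.1 + x.2 = 1 →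
          0 ≤ y.1 → 0 ≤ y.2 → y.1 + y.2 = 1 →
          α * max ‖x.1 - y.1‖ ‖x.2 - y.2‖ ≤ buresC2 x y ∧
            buresC2 x y ≤ β * max ‖x.1 - y.1‖ ‖x.2 - y.2‖ := by
  constructor
  · intro u x hu hx1 hx2 hx3
    obtain ⟨s, hs0, hs1, hxeq⟩ := aux_mem x hx1 hx2 hx3
    choose v hv0 hv1 hveq using fun n => aux_mem (u n) (hu n).1 (hu n).2.1 (hu n).2.2
    have hmax : ∀ n, max ‖(u n).1 - x.1‖ ‖(u n).2 - x.2‖ = |v n - s| := by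
      intro n
      rw [hveq n, hxeq]
      simp only [← Complex.ofReal_sub, Complex.norm_real, Real.norm_eq_abs]
      rw [show (1 - v n) - (1 - s) = -(v n - s) by ring, abs_neg, max_self]
    have hbur : ∀ n, buresC2 (u n) x
        = Real.sqrt (1 - (Real.sqrt (v n * s) + Real.sqrt ((1 - v n)*(1-s)))) := by
      intro n
      rw [hveq n, hxeq, aux_bures_eval _ _ (hv0 n) (hv1 n) hs0 hs1]
    simp only [hmax, hbur]
    constructor
    · intro h
      apply squeeze_zero (fun n => Real.sqrt_nonneg _)
        (fun n => aux_upper _ _ (hv0 n) (hv1 n) hs0 hs1)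
      have := h.sqrt
      rwa [Real.sqrt_zero] at this
    · intro h
      apply squeeze_zero (fun n => abs_nonneg _)
        (fun n => aux_lower _ _ (hv0 n) (hv1 n) hs0 hs1)
      have := h.const_mul (2 * Real.sqrt 2)
      simpa using this
  · rintro ⟨α, β, hα, hβ, H⟩
    set t : ℝ := min 1 (1/(4*β^2)) with ht
    have ht0 : 0 < t := lt_min one_pos (by positivity)
    have ht1 : t ≤ 1 := min_le_left _ _
    have htβ : β^2 * t ≤ 1/4 := by
      have := min_le_right 1 (1/(4*β^2))
      calc β^2 * t ≤ β^2 * (1/(4*β^2)) := by nlinarith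
        _ = 1/4 := by field_simp
    obtain ⟨-, hub⟩ := H ((t:ℂ), ((1-t:ℝ):ℂ)) (((0:ℝ):ℂ), ((1-(0:ℝ):ℝ):ℂ))
      (by rw [Complex.zero_le_real]; linarith) (by rw [Complex.zero_le_real]; linarith)
      (by push_cast; ring) (by rw [Complex.zero_le_real]) (by rw [Complex.zero_le_real]; norm_num)
      (by push_cast; ring)
    rw [aux_bures_eval t 0 (le_of_lt ht0) ht1 le_rfl zero_le_one] at hub
    have hmax : max ‖((t:ℝ):ℂ) - ((0:ℝ):ℂ)‖ ‖(((1-t:ℝ)):ℂ) - ((1-(0:ℝ):ℝ):ℂ)‖ = t := by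
      simp only [← Complex.ofReal_sub, Complex.norm_real, Real.norm_eq_abs]
      rw [show t - 0 = t by ring, show (1-t) - (1-0) = -t by ring, abs_neg, max_self,
        abs_of_pos ht0]
    rw [hmax] at hub
    have heval : (1 : ℝ) - (Real.sqrt (t*0) + Real.sqrt ((1-t)*(1-0))) = 1 - Real.sqrt (1-t) := by
      simp
    rw [heval] at hub
    -- now hub : √(1 - √(1-t)) ≤ β * t, derive contradiction
    have h1 : Real.sqrt (1-t) ≤ 1 - t/2 := by
      rw [show (1:ℝ) - t/2 = Real.sqrt ((1 - t/2)^2) by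
        rw [Real.sqrt_sq (by linarith)]]
      apply Real.sqrt_le_sqrt
      nlinarith
    have h2 : Real.sqrt (t/2) ≤ Real.sqrt (1 - Real.sqrt (1-t)) :=
      Real.sqrt_le_sqrt (by linarith)
    have h3 : β * t < Real.sqrt (t/2) := by
      rw [show β * t = Real.sqrt ((β*t)^2) by rw [Real.sqrt_sq (by positivity)]]
      apply Real.sqrt_lt_sqrt (by positivity)
      nlinarith
    linarith
end

section
/- Let A be a unital C*-algebra with faithful tracial state τ. The identity map from (D_τ(A), d_A) to (D_τ(A), d_B^τ) is continuous, where d_A is the C*-norm metric; i.e., the C*-norm topology on the density space is finer than the Bures metric topology. -/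
open Filter Topology ComplexOrder

section Aux

variable {A : Type*} [CStarAlgebra A] [PartialOrder A] [StarOrderedRing A]

lemma aux_sqrt_eq_cfc_real (a : A) (ha : 0 ≤ a) : CFC.sqrt a = cfc Real.sqrt a := by
  have hsa : IsSelfAdjoint a := .of_nonneg ha
  have hspec : ∀ t ∈ spectrum ℝ a, 0 ≤ t := fun t ht => spectrum_nonneg_of_nonneg ha ht
  refine CFC.sqrt_unique ?_ ?_
  · rw [← cfc_mul _ _ a (by fun_prop) (by fun_prop)]
    calc cfc (fun x => Real.sqrt x * Real.sqrt x) a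
        = cfc (id : ℝ → ℝ) a := cfc_congr (fun t ht => Real.mul_self_sqrt (hspec t ht))
      _ = a := cfc_id ℝ a
  · exact cfc_nonneg fun t _ => Real.sqrt_nonneg t

/-- Norm-continuity of the square root on nonnegative elements. -/
lemma aux_sqrt_cont (a : A) (ha : 0 ≤ a) {ε : ℝ} (hε : 0 < ε) :
    ∃ δ > (0:ℝ), ∀ b : A, 0 ≤ b → ‖a - b‖ < δ →
      ‖CFC.sqrt a - CFC.sqrt b‖ < ε := by
  rcases subsingleton_or_nontrivial A with hA | hA
  · exact ⟨1, one_pos, fun b _ _ => by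
      simpa [Subsingleton.elim (CFC.sqrt a - CFC.sqrt b) 0] using hε⟩
  set M : ℝ := ‖a‖ + 1 with hM
  obtain ⟨p, hp⟩ := exists_polynomial_near_of_continuousOn 0 M Real.sqrt
    (Real.continuous_sqrt.continuousOn) (ε/3) (by positivity)
  have key : ∀ b : A, 0 ≤ b → ‖b‖ ≤ M → ‖CFC.sqrt b - Polynomial.aeval b p‖ ≤ ε/3 := by
    intro b hb hbM
    have hsb : IsSelfAdjoint b := .of_nonneg hb
    rw [aux_sqrt_eq_cfc_real b hb, ← cfc_polynomial p b hsb,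
      ← cfc_sub Real.sqrt (fun t => Polynomial.eval t p) b (by fun_prop) (by fun_prop)]
    refine norm_cfc_le (by positivity) fun t ht => ?_
    have h0 : 0 ≤ t := spectrum_nonneg_of_nonneg hb ht
    have h1 : t ≤ M := by
      have := spectrum.norm_le_norm_of_mem ht
      rw [Real.norm_eq_abs, abs_of_nonneg h0] at this
      exact this.trans hbM
    have := hp t ⟨h0, h1⟩
    rw [Real.norm_eq_abs]
    rw [abs_sub_comm] at this
    exact le_of_lt this
  have hc : ContinuousAt (fun x : A => Polynomial.aeval x p) a :=
    (p.continuous_aeval).continuousAt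
  rw [Metric.continuousAt_iff] at hc
  obtain ⟨δ', hδ', hδ'2⟩ := hc (ε/3) (by positivity)
  refine ⟨min 1 δ', lt_min one_pos hδ', fun b hb hab => ?_⟩
  have hab1 : ‖a - b‖ < 1 := lt_of_lt_of_le hab (min_le_left _ _)
  have habδ : ‖a - b‖ < δ' := lt_of_lt_of_le hab (min_le_right _ _)
  have hbM : ‖b‖ ≤ M := by
    have : ‖b‖ ≤ ‖a‖ + ‖a - b‖ := by
      calc ‖b‖ = ‖a - (a - b)‖ := by rw [sub_sub_cancel]
      _ ≤ ‖a‖ + ‖a - b‖ := norm_sub_le _ _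
    linarith
  have h1 := key a ha (by simp [hM])
  have h2 := key b hb hbM
  have h3 : ‖(Polynomial.aeval a p : A) - Polynomial.aeval b p‖ < ε/3 := by
    have := hδ'2 (show dist b a < δ' by rwa [dist_eq_norm, norm_sub_rev])
    rwa [dist_eq_norm, norm_sub_rev] at this
  calc ‖CFC.sqrt a - CFC.sqrt b‖
      ≤ ‖CFC.sqrt a - Polynomial.aeval a p‖ + ‖(Polynomial.aeval a p : A) - Polynomial.aeval b p‖
        + ‖Polynomial.aeval b p - CFC.sqrt b‖ := by
        have := norm_add₃_le (a := CFC.sqrt a - Polynomial.aeval a p)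
          (b := (Polynomial.aeval a p : A) - Polynomial.aeval b p)
          (c := Polynomial.aeval b p - CFC.sqrt b)
        simpa using this
    _ < ε/3 + ε/3 + ε/3 := by
        rw [norm_sub_rev] at h2
        have h2' : ‖(Polynomial.aeval b p : A) - CFC.sqrt b‖ ≤ ε/3 := h2
        have h1' : ‖CFC.sqrt a - Polynomial.aeval a p‖ ≤ ε/3 := h1
        linarith
    _ = ε := by ring

lemma aux_tau_re_le (τ : A →ₗ[ℂ] ℂ)
    (hpos : ∀ a : A, 0 ≤ a → 0 ≤ τ a) (hstate : τ 1 = 1)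
    (a : A) (ha : IsSelfAdjoint a) : (τ a).re ≤ ‖a‖ := by
  have h1 : 0 ≤ τ (algebraMap ℝ A ‖a‖ - a) :=
    hpos _ (sub_nonneg.2 ha.le_algebraMap_norm_self)
  have h2 : τ (algebraMap ℝ A ‖a‖ - a) = (‖a‖ : ℂ) - τ a := by
    rw [map_sub]
    congr 1
    have : algebraMap ℝ A ‖a‖ = (‖a‖ : ℂ) • (1 : A) := by
      rw [Algebra.algebraMap_eq_smul_one]
      norm_num [← Complex.coe_smul]
    rw [this, map_smul, hstate, smul_eq_mul, mul_one]
  rw [h2] at h1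
  rw [Complex.le_def] at h1
  have := h1.1
  simp only [Complex.zero_re, Complex.sub_re, Complex.ofReal_re] at this
  linarith

end Aux

/-- Let `A` be a unital C*-algebra with faithful tracial state `τ`.
The identity map from the density space `D_τ(A)` with the C*-norm metric to `D_τ(A)`
with the Bures metric `d_B^τ(x,y) = √(1 − τ(|√x √y|))` is continuous; i.e. the C*-norm
topology is finer than the Bures topology. -/
theorem bures_id_continuous_of_norm
    {A : Type*} [CStarAlgebra A] [PartialOrder A] [StarOrderedRing A]
    (τ : A →ₗ[ℂ] ℂ)
    (hpos : ∀ a : A, 0 ≤ a → 0 ≤ τ a)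
    (htrace : ∀ a b : A, τ (a * b) = τ (b * a))
    (hfaithful : ∀ a : A, 0 ≤ a → τ a = 0 → a = 0)
    (hstate : τ 1 = 1) :
    ∀ x : A, 0 ≤ x → τ x = 1 → ∀ ε > (0:ℝ), ∃ δ > (0:ℝ), ∀ y : A, 0 ≤ y → τ y = 1 →
      ‖x - y‖ < δ →
        Real.sqrt (1 - (τ (CFC.sqrt
          (star (CFC.sqrt x * CFC.sqrt y) * (CFC.sqrt x * CFC.sqrt y)))).re) < ε := by
  intro x hx hτx ε hε
  set s : A := CFC.sqrt x with hs
  have hs0 : 0 ≤ s := CFC.sqrt_nonneg x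
  have hss : s * s = x := CFC.sqrt_mul_sqrt_self x hx
  have hxx : 0 ≤ x * x := by
    have := star_mul_self_nonneg x
    rwa [(IsSelfAdjoint.of_nonneg hx).star_eq] at this
  -- outer square root continuity at x * x
  obtain ⟨δ₂, hδ₂, hδ₂2⟩ := aux_sqrt_cont (x * x) hxx (ε := ε ^ 2) (by positivity)
  -- inner square root continuity at x
  set K : ℝ := ‖x‖ * (2 * ‖s‖ + 1) + 1 with hK
  have hK1 : (1:ℝ) ≤ K := by
    rw [hK]; nlinarith [norm_nonneg x, norm_nonneg s]
  have hKpos : (0:ℝ) < K := by positivity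
  set η : ℝ := min 1 (δ₂ / K) with hη
  have hηpos : 0 < η := lt_min one_pos (by positivity)
  obtain ⟨δ, hδ, hδ2⟩ := aux_sqrt_cont x hx hηpos
  refine ⟨δ, hδ, fun y hy hτy hxy => ?_⟩
  set t : A := CFC.sqrt y with ht
  have ht0 : 0 ≤ t := CFC.sqrt_nonneg y
  have hst : ‖s - t‖ < η := hδ2 y hy hxy
  have hst1 : ‖s - t‖ < 1 := lt_of_lt_of_le hst (min_le_left _ _)
  have hstδ : ‖s - t‖ < δ₂ / K := lt_of_lt_of_le hst (min_le_right _ _)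
  have htnorm : ‖t‖ ≤ ‖s‖ + 1 := by
    have : ‖t‖ ≤ ‖s‖ + ‖s - t‖ := by
      calc ‖t‖ = ‖s - (s - t)‖ := by rw [sub_sub_cancel]
      _ ≤ ‖s‖ + ‖s - t‖ := norm_sub_le _ _
    linarith
  -- the operator inside the absolute value
  have hstar : star (s * t) * (s * t) = t * x * t := by
    rw [star_mul, (IsSelfAdjoint.of_nonneg hs0).star_eq, (IsSelfAdjoint.of_nonneg ht0).star_eq]
    calc t * s * (s * t) = t * (s * s) * t := by noncomm_ring
    _ = t * x * t := by rw [hss]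
  have htxt : 0 ≤ t * x * t := by
    have := star_left_conjugate_nonneg hx t
    rwa [(IsSelfAdjoint.of_nonneg ht0).star_eq] at this
  -- estimate ‖x*x - t*x*t‖
  have hdiff : ‖x * x - t * x * t‖ < δ₂ := by
    have heq : x * x - t * x * t = s * x * (s - t) + (s - t) * x * t := by
      have : s * x * s = x * x := by
        calc s * x * s = s * (s * s) * s := by rw [hss]
        _ = (s * s) * (s * s) := by noncomm_ring
        _ = x * x := by rw [hss]
      rw [← this]; noncomm_ring
    rw [heq]
    have hb1 : ‖s * x * (s - t)‖ ≤ ‖s‖ * ‖x‖ * ‖s - t‖ := by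
      calc ‖s * x * (s - t)‖ ≤ ‖s * x‖ * ‖s - t‖ := norm_mul_le _ _
      _ ≤ ‖s‖ * ‖x‖ * ‖s - t‖ := by gcongr; exact norm_mul_le _ _
    have hb2 : ‖(s - t) * x * t‖ ≤ ‖s - t‖ * ‖x‖ * ‖t‖ := by
      calc ‖(s - t) * x * t‖ ≤ ‖(s - t) * x‖ * ‖t‖ := norm_mul_le _ _
      _ ≤ ‖s - t‖ * ‖x‖ * ‖t‖ := by gcongr; exact norm_mul_le _ _
    have hchain : ‖s * x * (s - t) + (s - t) * x * t‖ ≤ ‖s - t‖ * K := by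
      calc ‖s * x * (s - t) + (s - t) * x * t‖
          ≤ ‖s * x * (s - t)‖ + ‖(s - t) * x * t‖ := norm_add_le _ _
        _ ≤ ‖s‖ * ‖x‖ * ‖s - t‖ + ‖s - t‖ * ‖x‖ * (‖s‖ + 1) := by
            refine add_le_add hb1 (hb2.trans ?_)
            gcongr
        _ ≤ ‖s - t‖ * K := by
            rw [hK]
            have h0 : 0 ≤ ‖s - t‖ := norm_nonneg _
            nlinarith [norm_nonneg x, norm_nonneg s]
    have : ‖s - t‖ * K < (δ₂ / K) * K := by
      exact mul_lt_mul_of_pos_right hstδ hKpos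
    rw [div_mul_cancel₀ _ (ne_of_gt hKpos)] at this
    linarith
  -- conclude ‖x - sqrt(t*x*t)‖ < ε^2
  have hmain : ‖x - CFC.sqrt (t * x * t)‖ < ε ^ 2 := by
    have := hδ₂2 (t * x * t) htxt hdiff
    rwa [CFC.sqrt_mul_self x hx] at this
  set m : A := CFC.sqrt (star (s * t) * (s * t)) with hm
  have hm0 : 0 ≤ m := CFC.sqrt_nonneg _
  have hmeq : m = CFC.sqrt (t * x * t) := by rw [hm, hstar]
  -- τ bound
  have hsel : IsSelfAdjoint (x - m) :=
    (IsSelfAdjoint.of_nonneg hx).sub (IsSelfAdjoint.of_nonneg hm0)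
  have hτb : (τ (x - m)).re ≤ ‖x - m‖ := aux_tau_re_le τ hpos hstate _ hsel
  have hre : 1 - (τ m).re = (τ (x - m)).re := by
    rw [map_sub, Complex.sub_re, hτx]
    norm_num
  have hnorm : ‖x - m‖ < ε ^ 2 := by rw [hmeq]; exact hmain
  have hfin : 1 - (τ m).re < ε ^ 2 := by
    rw [hre]; exact lt_of_le_of_lt hτb hnorm
  exact (Real.sqrt_lt' hε).2 hfin
end

section
/- For the piecewise-linear functions f_n on [0,1] (f_n = 2nx on [0,1/(2n)], = 1 in the middle, = 2nx − 2n + 2 on [1−1/(2n),1]), the sup-norm distance satisfies ‖f_n − 1‖_∞ = 1 for every n ∈ ℕ, while the Bures distance d_B^ρ(f_n, 1) = √((3 − 2√2)/(3n)) tends to 0; hence the Bures metric and sup-norm metric on D_ρ(C([0,1])) are not topologically equivalent. -/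
open Filter Topology

/-- The piecewise-linear functions from the paper: `f_n(x) = 2nx` on `[0, 1/(2n)]`,
`f_n(x) = 1` on `(1/(2n), 1 − 1/(2n))`, and `f_n(x) = 2nx − 2n + 2` on `[1 − 1/(2n), 1]`. -/
noncomputable def fseq (n : ℕ) (x : ℝ) : ℝ :=
  if x ≤ 1 / (2 * n) then 2 * n * x
  else if x < 1 - 1 / (2 * n) then 1
  else 2 * n * x - 2 * n + 2

lemma fseq_eq {n : ℕ} (hn : 1 ≤ n) (x : ℝ) :
    fseq n x = min (2 * (n:ℝ) * x) 1 + max (2 * n * x - 2 * n + 1) 0 := by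
  have hN : (1:ℝ) ≤ n := by exact_mod_cast hn
  have h2N : (0:ℝ) < 2 * n := by linarith
  rw [fseq]
  split_ifs with h1 h2
  · have hx : 2 * (n:ℝ) * x ≤ 1 := by
      have := (le_div_iff₀ h2N).mp h1
      linarith [this]
    rw [min_eq_left hx, max_eq_right (by linarith)]
    ring
  · have hx : 1 ≤ 2 * (n:ℝ) * x := by
      have := (div_le_iff₀ h2N).mp (not_le.mp h1).le
      linarith
    have hx2 : 2 * (n:ℝ) * x - 2 * n + 1 ≤ 0 := by
      have : x * (2 * n) ≤ (1 - 1/(2*n)) * (2*n) := by nlinarith [h2.le]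
      have h1' : (1 - 1/(2*(n:ℝ))) * (2*n) = 2*n - 1 := by field_simp
      nlinarith
    rw [min_eq_right hx, max_eq_right hx2]; ring
  · have hx : 1 ≤ 2 * (n:ℝ) * x := by
      have := (div_le_iff₀ h2N).mp (not_le.mp h1).le
      linarith
    have hge : 1 - 1/(2*(n:ℝ)) ≤ x := not_lt.mp h2
    have hx2 : 0 ≤ 2 * (n:ℝ) * x - 2 * n + 1 := by
      have : (1 - 1/(2*(n:ℝ))) * (2*n) ≤ x * (2*n) := by nlinarith
      have h1' : (1 - 1/(2*(n:ℝ))) * (2*n) = 2*n - 1 := by field_simp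
      nlinarith
    rw [min_eq_right hx, max_eq_left hx2]; ring

lemma fseq_cont {n : ℕ} (hn : 1 ≤ n) : Continuous (fseq n) := by
  have : fseq n = fun x => min (2 * (n:ℝ) * x) 1 + max (2 * n * x - 2 * n + 1) 0 :=
    funext (fseq_eq hn)
  rw [this]; fun_prop

lemma fseq_zero (n : ℕ) : fseq n 0 = 0 := by
  rw [fseq, if_pos (by positivity)]; ring

lemma fseq_nonneg {n : ℕ} (hn : 1 ≤ n) {x : ℝ} (hx : 0 ≤ x) : 0 ≤ fseq n x := by
  rw [fseq_eq hn]
  have h1 : 0 ≤ min (2 * (n:ℝ) * x) 1 := le_min (by positivity) zero_le_one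
  have h2 : (0:ℝ) ≤ max (2 * n * x - 2 * n + 1) 0 := le_max_right _ _
  linarith

lemma fseq_le_two {n : ℕ} (hn : 1 ≤ n) {x : ℝ} (hx : x ≤ 1) : fseq n x ≤ 2 := by
  rw [fseq_eq hn]
  have hN : (1:ℝ) ≤ n := by exact_mod_cast hn
  have h1 : min (2 * (n:ℝ) * x) 1 ≤ 1 := min_le_right _ _
  have h2 : max (2 * (n:ℝ) * x - 2 * n + 1) 0 ≤ 1 := max_le (by nlinarith) zero_le_one
  linarith

lemma sqrt_int (p q : ℝ) (hp : 0 ≤ p) (hq : 0 ≤ q) :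
    ∫ x in p..q, Real.sqrt x = 2/3 * (q * Real.sqrt q - p * Real.sqrt p) := by
  rw [intervalIntegral.integral_congr (g := fun x => x ^ ((1:ℝ)/2))
      (fun x _ => Real.sqrt_eq_rpow x)]
  rw [integral_rpow (Or.inl (by norm_num))]
  have e : ∀ r : ℝ, 0 ≤ r → r ^ ((1:ℝ)/2 + 1) = r * Real.sqrt r := by
    intro r hr
    rw [Real.rpow_add' hr (by norm_num), Real.rpow_one, Real.sqrt_eq_rpow]; ring
  rw [e q hq, e p hp]; ring

lemma lin_int (c d p q : ℝ) : ∫ x in p..q, (c * x + d) = c * (q^2 - p^2)/2 + d * (q - p) := by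
  rw [intervalIntegral.integral_add
      (((by fun_prop : Continuous fun x : ℝ => c * x)).intervalIntegrable _ _) intervalIntegrable_const,
      intervalIntegral.integral_const_mul, integral_id, intervalIntegral.integral_const,
      smul_eq_mul]
  ring

lemma fseq_piece1 {n : ℕ} (hn : 1 ≤ n) {x : ℝ} (hx : x ∈ Set.Icc (0:ℝ) (1/(2*(n:ℝ)))) :
    fseq n x = 2 * n * x := by
  have hN : (1:ℝ) ≤ n := by exact_mod_cast hn
  have h2N : (0:ℝ) < 2 * n := by linarith
  obtain ⟨hx0, hx1⟩ := hx
  have ha : 2 * (n:ℝ) * (1/(2*n)) = 1 := by field_simp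
  rw [fseq_eq hn, min_eq_left (by nlinarith), max_eq_right (by nlinarith)]
  ring

lemma fseq_piece2 {n : ℕ} (hn : 1 ≤ n) {x : ℝ}
    (hx : x ∈ Set.Icc (1/(2*(n:ℝ))) (1 - 1/(2*(n:ℝ)))) : fseq n x = 1 := by
  have hN : (1:ℝ) ≤ n := by exact_mod_cast hn
  have h2N : (0:ℝ) < 2 * n := by linarith
  obtain ⟨hx0, hx1⟩ := hx
  have ha : 2 * (n:ℝ) * (1/(2*n)) = 1 := by field_simp
  rw [fseq_eq hn, min_eq_right (by nlinarith), max_eq_right (by nlinarith)]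
  ring

lemma fseq_piece3 {n : ℕ} (hn : 1 ≤ n) {x : ℝ}
    (hx : x ∈ Set.Icc (1 - 1/(2*(n:ℝ))) 1) : fseq n x = 2 * n * x - 2 * n + 2 := by
  have hN : (1:ℝ) ≤ n := by exact_mod_cast hn
  have h2N : (0:ℝ) < 2 * n := by linarith
  obtain ⟨hx0, hx1⟩ := hx
  have ha : 2 * (n:ℝ) * (1/(2*n)) = 1 := by field_simp
  rw [fseq_eq hn, min_eq_right (by nlinarith), max_eq_left (by nlinarith)]
  ring

lemma fseq_integral {n : ℕ} (hn : 1 ≤ n) : ∫ x in (0:ℝ)..1, fseq n x = 1 := by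
  have hN : (1:ℝ) ≤ n := by exact_mod_cast hn
  have h2N : (0:ℝ) < 2 * n := by linarith
  set a : ℝ := 1/(2*(n:ℝ)) with ha_def
  have ha0 : 0 < a := by positivity
  have ha2 : a ≤ 1/2 := by rw [ha_def, div_le_div_iff₀ h2N (by norm_num)]; linarith
  have hc : Continuous (fseq n) := fseq_cont hn
  have hsplit : ∫ x in (0:ℝ)..1, fseq n x
      = (∫ x in (0:ℝ)..a, fseq n x) + (∫ x in a..(1-a), fseq n x)
        + (∫ x in (1-a)..1, fseq n x) := by
    rw [intervalIntegral.integral_add_adjacent_intervals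
          (hc.intervalIntegrable _ _) (hc.intervalIntegrable _ _),
        intervalIntegral.integral_add_adjacent_intervals
          (hc.intervalIntegrable _ _) (hc.intervalIntegrable _ _)]
  have hu1 : Set.uIcc (0:ℝ) a = Set.Icc 0 a := Set.uIcc_of_le ha0.le
  have hu2 : Set.uIcc a (1-a) = Set.Icc a (1-a) := Set.uIcc_of_le (by linarith)
  have hu3 : Set.uIcc (1-a) (1:ℝ) = Set.Icc (1-a) 1 := Set.uIcc_of_le (by linarith)
  have I1 : ∫ x in (0:ℝ)..a, fseq n x = 2*(n:ℝ) * (a^2 - 0^2)/2 + 0 * (a - 0) := by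
    rw [intervalIntegral.integral_congr (g := fun x => 2*(n:ℝ)*x + 0)]
    · exact lin_int _ _ _ _
    · intro x hx
      rw [hu1] at hx
      show fseq n x = 2*(n:ℝ)*x + 0
      rw [fseq_piece1 hn hx]; ring
  have I2 : ∫ x in a..(1-a), fseq n x = 1 - 2*a := by
    rw [intervalIntegral.integral_congr (g := fun _ => (1:ℝ))]
    · simp; ring
    · intro x hx
      rw [hu2] at hx
      exact fseq_piece2 hn hx
  have I3 : ∫ x in (1-a)..1, fseq n x
      = 2*(n:ℝ) * (1^2 - (1-a)^2)/2 + (2 - 2*n) * (1 - (1-a)) := by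
    rw [intervalIntegral.integral_congr (g := fun x => 2*(n:ℝ)*x + (2 - 2*n))]
    · exact lin_int _ _ _ _
    · intro x hx
      rw [hu3] at hx
      show fseq n x = 2*(n:ℝ)*x + (2 - 2*n)
      rw [fseq_piece3 hn hx]; ring
  rw [hsplit, I1, I2, I3, ha_def]
  field_simp
  ring

lemma fseq_sqrt_integral {n : ℕ} (hn : 1 ≤ n) :
    ∫ x in (0:ℝ)..1, Real.sqrt (fseq n x) = 1 + (2 * Real.sqrt 2 - 3) / (3 * n) := by
  have hN : (1:ℝ) ≤ n := by exact_mod_cast hn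
  have h2N : (0:ℝ) < 2 * n := by linarith
  set a : ℝ := 1/(2*(n:ℝ)) with ha_def
  have ha0 : 0 < a := by positivity
  have ha2 : a ≤ 1/2 := by rw [ha_def, div_le_div_iff₀ h2N (by norm_num)]; linarith
  have haN : 2 * (n:ℝ) * a = 1 := by rw [ha_def]; field_simp
  have hc : Continuous fun x => Real.sqrt (fseq n x) :=
    Real.continuous_sqrt.comp (fseq_cont hn)
  have hsplit : ∫ x in (0:ℝ)..1, Real.sqrt (fseq n x)
      = (∫ x in (0:ℝ)..a, Real.sqrt (fseq n x))
        + (∫ x in a..(1-a), Real.sqrt (fseq n x))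
        + (∫ x in (1-a)..1, Real.sqrt (fseq n x)) := by
    rw [intervalIntegral.integral_add_adjacent_intervals
          (hc.intervalIntegrable _ _) (hc.intervalIntegrable _ _),
        intervalIntegral.integral_add_adjacent_intervals
          (hc.intervalIntegrable _ _) (hc.intervalIntegrable _ _)]
  have hu1 : Set.uIcc (0:ℝ) a = Set.Icc 0 a := Set.uIcc_of_le ha0.le
  have hu2 : Set.uIcc a (1-a) = Set.Icc a (1-a) := Set.uIcc_of_le (by linarith)
  have hu3 : Set.uIcc (1-a) (1:ℝ) = Set.Icc (1-a) 1 := Set.uIcc_of_le (by linarith)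
  have I1 : ∫ x in (0:ℝ)..a, Real.sqrt (fseq n x)
      = Real.sqrt (2*n) * (2/3 * (a * Real.sqrt a)) := by
    rw [intervalIntegral.integral_congr (g := fun x => Real.sqrt (2*n) * Real.sqrt x)]
    · rw [intervalIntegral.integral_const_mul, sqrt_int 0 a le_rfl ha0.le]
      simp
    · intro x hx
      rw [hu1] at hx
      show Real.sqrt (fseq n x) = Real.sqrt (2*n) * Real.sqrt x
      rw [fseq_piece1 hn hx, ← Real.sqrt_mul (by positivity), mul_assoc]
  have I2 : ∫ x in a..(1-a), Real.sqrt (fseq n x) = 1 - 2*a := by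
    rw [intervalIntegral.integral_congr (g := fun _ => (1:ℝ))]
    · simp; ring
    · intro x hx
      rw [hu2] at hx
      show Real.sqrt (fseq n x) = 1
      rw [fseq_piece2 hn hx, Real.sqrt_one]
  have I3 : ∫ x in (1-a)..1, Real.sqrt (fseq n x)
      = Real.sqrt (2*n) * (2/3 * ((2*a) * Real.sqrt (2*a) - a * Real.sqrt a)) := by
    have hc' : 2 * (n:ℝ) * (1/(n:ℝ)) = 2 := by field_simp
    rw [intervalIntegral.integral_congr
        (g := fun x => Real.sqrt (2*n) * Real.sqrt (x - (1 - 1/(n:ℝ))))]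
    · rw [intervalIntegral.integral_const_mul]
      have := intervalIntegral.integral_comp_sub_right (a := 1-a) (b := (1:ℝ))
        (fun x => Real.sqrt x) (1 - 1/(n:ℝ))
      rw [this]
      have e1 : 1 - a - (1 - 1/(n:ℝ)) = a := by
        rw [ha_def]; field_simp; ring
      have e2 : 1 - (1 - 1/(n:ℝ)) = 2*a := by
        rw [ha_def]; field_simp; ring
      rw [e1, e2, sqrt_int a (2*a) ha0.le (by linarith)]
    · intro x hx
      rw [hu3] at hx
      show Real.sqrt (fseq n x) = Real.sqrt (2*n) * Real.sqrt (x - (1 - 1/(n:ℝ)))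
      rw [fseq_piece3 hn hx, ← Real.sqrt_mul (by positivity)]
      congr 1
      field_simp
      ring
  have s2 : Real.sqrt (2*(n:ℝ)) * Real.sqrt (2*a) = Real.sqrt 2 := by
    rw [← Real.sqrt_mul (by positivity)]
    congr 1
    nlinarith
  rw [hsplit, I1, I2, I3]
  have expand : Real.sqrt (2*(n:ℝ)) * (2/3 * (a * Real.sqrt a))
      + (1 - 2*a)
      + Real.sqrt (2*(n:ℝ)) * (2/3 * ((2*a) * Real.sqrt (2*a) - a * Real.sqrt a))
      = 1 - 2*a + 4/3 * a * (Real.sqrt (2*(n:ℝ)) * Real.sqrt (2*a)) := by ring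
  rw [expand, s2, ha_def]
  field_simp
  ring

/-- For the piecewise-linear `f_n`, the sup-norm distance to the
constant function `1` equals `1` for every `n ≥ 1`, while the Bures distance
`d_B^ρ(f_n, 1) = √((3 − 2√2)/(3n)) → 0`; hence on the density space
`D_ρ(C([0,1]))` the Bures metric and the sup-norm metric are not topologically
equivalent: Bures convergence does not imply uniform convergence. -/
theorem bures_supnorm_not_topologically_equivalent :
    (∀ n : ℕ, 1 ≤ n → (⨆ x : Set.Icc (0:ℝ) 1, |fseq n x - 1|) = 1)
    ∧ (∀ n : ℕ, 1 ≤ n →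
        Real.sqrt (1 - ∫ x in (0:ℝ)..1, Real.sqrt (fseq n x))
          = Real.sqrt ((3 - 2 * Real.sqrt 2) / (3 * n)))
    ∧ Tendsto (fun n : ℕ => Real.sqrt ((3 - 2 * Real.sqrt 2) / (3 * n))) atTop (𝓝 0)
    ∧ ¬ (∀ g : ℕ → ℝ → ℝ,
          (∀ n, ContinuousOn (g n) (Set.Icc 0 1)) →
          (∀ n, ∀ x ∈ Set.Icc (0:ℝ) 1, 0 ≤ g n x) →
          (∀ n, (∫ x in (0:ℝ)..1, g n x) = 1) →
          Tendsto (fun n => Real.sqrt (1 - ∫ x in (0:ℝ)..1, Real.sqrt (g n x))) atTop (𝓝 0) →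
          TendstoUniformlyOn g (fun _ => 1) atTop (Set.Icc 0 1)) := by
  have hbures : ∀ n : ℕ, 1 ≤ n →
      Real.sqrt (1 - ∫ x in (0:ℝ)..1, Real.sqrt (fseq n x))
        = Real.sqrt ((3 - 2 * Real.sqrt 2) / (3 * n)) := by
    intro n hn
    rw [fseq_sqrt_integral hn]
    congr 1
    ring
  have htend : Tendsto (fun n : ℕ => Real.sqrt ((3 - 2 * Real.sqrt 2) / (3 * n)))
      atTop (𝓝 0) := by
    have h1 : Tendsto (fun n : ℕ => (3 - 2 * Real.sqrt 2) / (3 * (n:ℝ))) atTop (𝓝 0) := by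
      have h2 := tendsto_const_div_atTop_nhds_zero_nat ((3 - 2 * Real.sqrt 2) / 3)
      refine h2.congr fun n => ?_
      rw [div_div]
    have := (Real.continuous_sqrt.tendsto' 0 0 Real.sqrt_zero).comp h1
    exact this
  refine ⟨?_, hbures, htend, ?_⟩
  · intro n hn
    have hbound : ∀ x : Set.Icc (0:ℝ) 1, |fseq n x - 1| ≤ 1 := by
      rintro ⟨x, hx0, hx1⟩
      rw [abs_le]
      constructor
      · have := fseq_nonneg hn hx0
        simp only
        linarith
      · have := fseq_le_two hn hx1
        simp only
        linarith
    have hbdd : BddAbove (Set.range fun x : Set.Icc (0:ℝ) 1 => |fseq n x - 1|) := by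
      refine ⟨1, ?_⟩
      rintro y ⟨x, rfl⟩
      exact hbound x
    apply le_antisymm
    · exact ciSup_le hbound
    · have h0 : (0:ℝ) ∈ Set.Icc (0:ℝ) 1 := by norm_num
      have := le_ciSup hbdd (⟨0, h0⟩ : Set.Icc (0:ℝ) 1)
      simpa [fseq_zero] using this
  · intro h
    have hB : Tendsto
        (fun n : ℕ => Real.sqrt (1 - ∫ x in (0:ℝ)..1, Real.sqrt (fseq (n+1) x)))
        atTop (𝓝 0) := by
      have := htend.comp (tendsto_add_atTop_nat 1)
      refine this.congr fun n => ?_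
      exact (hbures (n+1) (by omega)).symm
    have hUnif := h (fun n => fseq (n+1))
      (fun n => (fseq_cont (n := n+1) (by omega)).continuousOn)
      (fun n x hx => fseq_nonneg (by omega) hx.1)
      (fun n => fseq_integral (by omega)) hB
    rw [Metric.tendstoUniformlyOn_iff] at hUnif
    obtain ⟨N, hN⟩ := (hUnif 1 one_pos).exists
    have := hN 0 (by norm_num)
    rw [fseq_zero] at this
    simp [Real.dist_eq] at this
end
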